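/- Let Θ be a classical–quantum channel from a finite set 𝒰 to density operators ρ^u_{Y_{[1:L]}} on H_{Y_1}⊗…⊗H_{Y_L}, with input U ∼ P̃_U satisfying Σ_u |P̃_U(u) − 1/|𝒰|| ≤ ε', and let 𝔸 ⊆ 2^{[1:L]}. Suppose there is an ε''-reliable source code for the source U with compound quantum side information (ρ^U_{Y_𝓐})_{𝓐∈𝔸}, consisting of a surjective linear encoder g:𝒰→𝒞 (𝒰, 𝒞 finite vector spaces over a finite field) and decoders h_𝓐 for each 𝓐∈𝔸, i.e., max_{𝓐∈𝔸} Σ_u P̃_U(u) Pr[h_𝓐(ρ^u_{Y_𝓐}, g(u)) ≠ u] ≤ ε''. Then there exists a family of encoders and decoders {Enc_c, {Dec_{c,𝓐}}_{𝓐∈𝔸}}_{c∈𝒞}, with Enc_c : 𝒮 → 𝒰 for a secret set 𝒮 of size |𝒮| = |𝒰|/|𝒞| and Dec_{c,𝓐} a measurement on H_{Y_𝓐} with outcomes in 𝒮, such that max_{𝓐∈𝔸} Σ_{c∈𝒞} |𝒞|^{−1} P̄_e^{c,𝓐} ≤ ε' + ε'', where P̄_e^{c,𝓐} is the error probability Pr[Dec_{c,𝓐}(ρ^{Enc_c(S)}_{Y_𝓐})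 ≠ S] averaged over S uniform on 𝒮. -/

import Mathlib

open scoped Kronecker ComplexOrder
open Matrix

noncomputable section

/-- Total positive-semidefinite square root (junk value `0` if not PSD). -/
noncomputable def psdSqrt {ι : Type*} [Fintype ι] [DecidableEq ι]
    (A : Matrix ι ι ℂ) : Matrix ι ι ℂ :=
  open scoped Classical in
  if h : A.PosSemidef then
    (h.1.eigenvectorUnitary : Matrix ι ι ℂ) * diagonal ((↑) ∘ (√·) ∘ h.1.eigenvalues) *
      (star h.1.eigenvectorUnitary : Matrix ι ι ℂ) else 0

/-- Trace norm ‖A‖₁ = Tr √(A†A). -/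
noncomputable def traceNorm {ι : Type*} [Fintype ι] [DecidableEq ι]
    (A : Matrix ι ι ℂ) : ℝ :=
  ((psdSqrt (Aᴴ * A)).trace).re

/-- Density operator. -/
def IsDensity {ι : Type*} [Fintype ι] [DecidableEq ι] (ρ : Matrix ι ι ℂ) : Prop :=
  ρ.PosSemidef ∧ ρ.trace = 1

/-- Subnormalized state: PSD with trace at most one. -/
def IsSubnormalized {ι : Type*} [Fintype ι] [DecidableEq ι] (ρ : Matrix ι ι ℂ) : Prop :=
  ρ.PosSemidef ∧ (ρ.trace).re ≤ 1

/-- Fidelity F(ρ,σ) = ‖√ρ√σ‖₁². -/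
noncomputable def fidelity {ι : Type*} [Fintype ι] [DecidableEq ι]
    (ρ σ : Matrix ι ι ℂ) : ℝ :=
  (traceNorm (psdSqrt ρ * psdSqrt σ)) ^ 2

/-- Purified distance P(ρ,σ) = √(1 − F(ρ,σ)). -/
noncomputable def purifiedDist {ι : Type*} [Fintype ι] [DecidableEq ι]
    (ρ σ : Matrix ι ι ℂ) : ℝ :=
  Real.sqrt (1 - fidelity ρ σ)

/-- ε-ball of subnormalized states around ρ in purified distance. -/
def pdBall {ι : Type*} [Fintype ι] [DecidableEq ι] (ε : ℝ) (ρ : Matrix ι ι ℂ) :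
    Set (Matrix ι ι ℂ) :=
  {τ | IsSubnormalized τ ∧ purifiedDist ρ τ ≤ ε}

/-- Loewner partial order: A ⊑ B iff B − A is PSD. -/
def loewnerLE {ι : Type*} [Fintype ι] (A B : Matrix ι ι ℂ) : Prop :=
  (B - A).PosSemidef

/-- Conditional min-entropy H_min(A|B)_ρ. -/
noncomputable def Hmin {α β : Type*} [Fintype α] [DecidableEq α] [Fintype β] [DecidableEq β]
    (ρ : Matrix (α × β) (α × β) ℂ) : ℝ :=
  sSup {r : ℝ | ∃ σ : Matrix β β ℂ, IsDensity σ ∧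
    loewnerLE ρ ((((2 : ℝ) ^ (-r) : ℝ) : ℂ) • ((1 : Matrix α α ℂ) ⊗ₖ σ))}

/-- Conditional max-entropy H_max(A|B)_ρ. -/
noncomputable def Hmax {α β : Type*} [Fintype α] [DecidableEq α] [Fintype β] [DecidableEq β]
    (ρ : Matrix (α × β) (α × β) ℂ) : ℝ :=
  sSup {r : ℝ | ∃ σ : Matrix β β ℂ, IsDensity σ ∧
    r = Real.logb 2 (fidelity ρ ((1 : Matrix α α ℂ) ⊗ₖ σ))}

/-- Smooth conditional min-entropy H_min^ε(A|B)_ρ. -/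
noncomputable def smoothHmin {α β : Type*} [Fintype α] [DecidableEq α] [Fintype β] [DecidableEq β]
    (ε : ℝ) (ρ : Matrix (α × β) (α × β) ℂ) : ℝ :=
  sSup {r : ℝ | ∃ τ ∈ pdBall ε ρ, r = Hmin τ}

/-- Smooth conditional max-entropy H_max^ε(A|B)_ρ. -/
noncomputable def smoothHmax {α β : Type*} [Fintype α] [DecidableEq α] [Fintype β] [DecidableEq β]
    (ε : ℝ) (ρ : Matrix (α × β) (α × β) ℂ) : ℝ :=
  sInf {r : ℝ | ∃ τ ∈ pdBall ε ρ, r = Hmax τ}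

/-- A probability distribution on a finite type. -/
def IsProbDist {X : Type*} [Fintype X] (P : X → ℝ) : Prop :=
  (∀ x, 0 ≤ P x) ∧ ∑ x, P x = 1

/-- Configuration of the subsystems of the users in `D`. -/
abbrev SubCfg {L : ℕ} (Y : Fin L → Type*) (D : Finset (Fin L)) : Type _ :=
  ∀ l : {l : Fin L // l ∈ D}, Y l.1

/-- Glue a configuration on `D` with one on its complement. -/
def glue {L : ℕ} {Y : Fin L → Type*} (D : Finset (Fin L))
    (y : SubCfg Y D) (z : ∀ l : {l : Fin L // l ∉ D}, Y l.1) : ∀ l, Y l :=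
  fun l => if h : l ∈ D then y ⟨l, h⟩ else z ⟨l, h⟩

/-- Reduced (marginal) state on the subsystems of the users in `D`,
obtained by partial trace over the complement of `D`. -/
noncomputable def reduceTo {L : ℕ} {Y : Fin L → Type*} [∀ l, Fintype (Y l)]
    [∀ l, DecidableEq (Y l)] (D : Finset (Fin L))
    (M : Matrix (∀ l, Y l) (∀ l, Y l) ℂ) :
    Matrix (SubCfg Y D) (SubCfg Y D) ℂ :=
  fun y y' => ∑ z : ∀ l : {l : Fin L // l ∉ D}, Y l.1, M (glue D y z) (glue D y' z)

/-- The classical–quantum state ψ_{X Y_D} induced by the input distribution `P`,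
the channel `W` and the user set `D`. -/
noncomputable def cqState {X : Type*} [Fintype X] [DecidableEq X]
    {L : ℕ} {Y : Fin L → Type*} [∀ l, Fintype (Y l)] [∀ l, DecidableEq (Y l)]
    (P : X → ℝ) (W : X → Matrix (∀ l, Y l) (∀ l, Y l) ℂ) (D : Finset (Fin L)) :
    Matrix (X × SubCfg Y D) (X × SubCfg Y D) ℂ :=
  fun p q => if p.1 = q.1 then (P p.1 : ℂ) * reduceTo D (W p.1) p.2 q.2 else 0

end

noncomputable section

/-- The classical–quantum state ρ̃_{S Y_D} of a uniform secret together with the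
channel outputs of the users in `D`, for the encoder `Enc`. -/
noncomputable def secretOutState {S : Type*} [Fintype S] [DecidableEq S]
    {X : Type*} {L : ℕ} {Y : Fin L → Type*} [∀ l, Fintype (Y l)] [∀ l, DecidableEq (Y l)]
    (Enc : S → X) (W : X → Matrix (∀ l, Y l) (∀ l, Y l) ℂ) (D : Finset (Fin L)) :
    Matrix (S × SubCfg Y D) (S × SubCfg Y D) ℂ :=
  fun p q => if p.1 = q.1
    then (((Fintype.card S : ℝ)⁻¹ : ℝ) : ℂ) * reduceTo D (W (Enc p.1)) p.2 q.2 else 0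

/-- `Dec` is a POVM (a measurement) with outcomes in `S`. -/
def IsPOVM {S ι : Type*} [Fintype S] [Fintype ι] [DecidableEq ι]
    (Dec : S → Matrix ι ι ℂ) : Prop :=
  (∀ s, (Dec s).PosSemidef) ∧ ∑ s, Dec s = 1

/-- Average probability of error of the decoding measurement `Dec` for the user set `D`,
for a uniformly distributed secret. -/
noncomputable def avgError {S : Type*} [Fintype S] [DecidableEq S]
    {X : Type*} {L : ℕ} {Y : Fin L → Type*} [∀ l, Fintype (Y l)] [∀ l, DecidableEq (Y l)]
    (Enc : S → X) (W : X → Matrix (∀ l, Y l) (∀ l, Y l) ℂ) (D : Finset (Fin L))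
    (Dec : S → Matrix (SubCfg Y D) (SubCfg Y D) ℂ) : ℝ :=
  1 - (Fintype.card S : ℝ)⁻¹ * ∑ s, ((Dec s * reduceTo D (W (Enc s))).trace).re

end

/-!
The secret is carried by the cosets of `ker g`: for each syndrome `c`, the encoder `Enc_c`
enumerates the fibre `g⁻¹(c)`, and the decoder `Dec_c` is the source decoder `h_{·}(c)` read
on that fibre, with all outcomes outside the fibre reported as one fixed secret. Then the error
of `Dec_c` is at most the average source error over `g⁻¹(c)`, and averaging over `c` gives the
source error for a uniform input. Since each error probability lies in `[0, 1]`, replacing the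
uniform input by `P̃_U` costs at most the variational distance `ε'`.
-/

open Finset

section Trace

variable {ι : Type*} [Fintype ι]

lemma Matrix.PosSemidef.re_trace_nonneg {A : Matrix ι ι ℂ} (hA : A.PosSemidef) :
    0 ≤ A.trace.re :=
  (Complex.le_def.mp hA.trace_nonneg).1

open scoped MatrixOrder in
lemma Matrix.PosSemidef.re_trace_mul_nonneg [DecidableEq ι] {A B : Matrix ι ι ℂ}
    (hA : A.PosSemidef) (hB : B.PosSemidef) : 0 ≤ (A * B).trace.re := by
  obtain ⟨S, rfl⟩ := CStarAlgebra.nonneg_iff_eq_star_mul_self.mp hA.nonneg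
  rw [star_eq_conjTranspose, Matrix.mul_assoc, Matrix.trace_mul_comm]
  exact (hB.mul_mul_conjTranspose_same S).re_trace_nonneg

lemma IsPOVM.re_trace_mul_le_one [DecidableEq ι] {X : Type*} [Fintype X] [DecidableEq X]
    {M : X → Matrix ι ι ℂ} (hM : IsPOVM M) {ρ : Matrix ι ι ℂ} (hρ : IsDensity ρ) (x : X) :
    (M x * ρ).trace.re ≤ 1 := by
  have hrest : (1 - M x).PosSemidef := by
    rw [← hM.2, ← add_sum_erase _ _ (mem_univ x), add_sub_cancel_left]
    exact posSemidef_sum _ fun y _ => hM.1 y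
  have := hrest.re_trace_mul_nonneg hρ.1
  rwa [Matrix.sub_mul, Matrix.one_mul, trace_sub, hρ.2, Complex.sub_re, Complex.one_re,
    sub_nonneg] at this

end Trace

section PartialTrace

variable {L : ℕ} {Y : Fin L → Type*} [∀ l, Fintype (Y l)] [∀ l, DecidableEq (Y l)]
  (D : Finset (Fin L))

omit [∀ l, Fintype (Y l)] [∀ l, DecidableEq (Y l)] in
lemma glue_eq_piEquivPiSubtypeProd_symm (y : SubCfg Y D)
    (z : ∀ l : {l : Fin L // l ∉ D}, Y l.1) :
    glue D y z = (Equiv.piEquivPiSubtypeProd (· ∈ D) Y).symm (y, z) :=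
  rfl

lemma reduceTo_eq_sum_submatrix (M : Matrix (∀ l, Y l) (∀ l, Y l) ℂ) :
    reduceTo D M = ∑ z, M.submatrix (glue D · z) (glue D · z) := by
  ext y y'
  simp only [reduceTo, Matrix.sum_apply, Matrix.submatrix_apply]

lemma trace_reduceTo (M : Matrix (∀ l, Y l) (∀ l, Y l) ℂ) :
    (reduceTo D M).trace = M.trace := by
  simp only [Matrix.trace, Matrix.diag, reduceTo, glue_eq_piEquivPiSubtypeProd_symm]
  rw [← Fintype.sum_prod_type']
  exact (Equiv.piEquivPiSubtypeProd _ _).symm.sum_comp fun w => M w w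

lemma Matrix.PosSemidef.reduceTo {M : Matrix (∀ l, Y l) (∀ l, Y l) ℂ} (hM : M.PosSemidef) :
    (reduceTo D M).PosSemidef := by
  rw [reduceTo_eq_sum_submatrix]
  exact posSemidef_sum _ fun z _ => hM.submatrix _

lemma IsDensity.reduceTo {M : Matrix (∀ l, Y l) (∀ l, Y l) ℂ} (hM : IsDensity M) :
    IsDensity (reduceTo D M) :=
  ⟨hM.1.reduceTo D, (trace_reduceTo D M).trans hM.2⟩

end PartialTrace

lemma AddMonoidHom.exists_prod_fin_equiv_of_surjective {G H : Type*} [AddGroup G] [AddGroup H]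
    [Finite G] {g : G →+ H} (hg : Function.Surjective g) :
    ∃ m, 0 < m ∧ ∃ E : H × Fin m ≃ G, ∀ p, g (E p) = p.1 := by
  refine ⟨Nat.card g.ker, Nat.card_pos, ?_⟩
  let fibreEquiv (c : H) : Fin (Nat.card g.ker) ≃ g ⁻¹' {c} :=
    (Finite.equivFin g.ker).symm.trans (g.fiberEquivKerOfSurjective hg c).symm
  refine ⟨(Equiv.sigmaEquivProd _ _).symm.trans
    ((Equiv.sigmaCongrRight fibreEquiv).trans (Equiv.sigmaFiberEquiv g)), fun p => ?_⟩
  exact (fibreEquiv p.1 p.2).2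

section Relabel

variable {X S ι : Type*} [Fintype X] [DecidableEq X] [Fintype S] [DecidableEq S] [Fintype ι]
  [DecidableEq ι]

def relabelPOVM (M : X → Matrix ι ι ℂ) (E : S ↪ X) (s₀ s : S) : Matrix ι ι ℂ :=
  M (E s) + if s = s₀ then ∑ x ∈ (univ.map E)ᶜ, M x else 0

lemma IsPOVM.relabel {M : X → Matrix ι ι ℂ} (hM : IsPOVM M) (E : S ↪ X) (s₀ : S) :
    IsPOVM (relabelPOVM M E s₀) := by
  refine ⟨fun s => (hM.1 _).add ?_, ?_⟩
  · split_ifs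
    exacts [posSemidef_sum _ fun x _ => hM.1 x, .zero]
  · rw [← hM.2, ← sum_add_sum_compl (univ.map E), sum_map]
    simp only [relabelPOVM, sum_add_distrib, sum_ite_eq', mem_univ, if_true]

lemma re_trace_mul_le_relabelPOVM {M : X → Matrix ι ι ℂ} (hM : ∀ x, (M x).PosSemidef)
    (E : S ↪ X) (s₀ : S) {ρ : Matrix ι ι ℂ} (hρ : ρ.PosSemidef) (s : S) :
    (M (E s) * ρ).trace.re ≤ (relabelPOVM M E s₀ s * ρ).trace.re := by
  rw [relabelPOVM, Matrix.add_mul, trace_add, Complex.add_re, le_add_iff_nonneg_right]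
  split_ifs
  · exact (posSemidef_sum _ fun x _ => hM x).re_trace_mul_nonneg hρ
  · simp

lemma avgError_relabelPOVM_le {L : ℕ} {Y : Fin L → Type*} [∀ l, Fintype (Y l)]
    [∀ l, DecidableEq (Y l)] {W : X → Matrix (∀ l, Y l) (∀ l, Y l) ℂ}
    (hW : ∀ x, (W x).PosSemidef) (D : Finset (Fin L))
    {M : X → Matrix (SubCfg Y D) (SubCfg Y D) ℂ} (hM : ∀ x, (M x).PosSemidef)
    (E : S ↪ X) (s₀ : S) :
    avgError E W D (relabelPOVM M E s₀) ≤
      (Fintype.card S : ℝ)⁻¹ * ∑ s, (1 - (M (E s) * reduceTo D (W (E s))).trace.re) := by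
  have hS : (Fintype.card S : ℝ) ≠ 0 :=
    Nat.cast_ne_zero.mpr (Fintype.card_pos_iff.mpr ⟨s₀⟩).ne'
  have hsum := sum_le_sum fun s (_ : s ∈ univ) =>
    re_trace_mul_le_relabelPOVM hM E s₀ ((hW (E s)).reduceTo D) s
  rw [avgError, sum_sub_distrib, sum_const, card_univ, nsmul_one, mul_sub, inv_mul_cancel₀ hS]
  gcongr

end Relabel

lemma sum_mul_le_sum_mul_add_sum_abs_sub {X : Type*} [Fintype X] (p q e : X → ℝ)
    (he₀ : ∀ x, 0 ≤ e x) (he₁ : ∀ x, e x ≤ 1) :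
    ∑ x, q x * e x ≤ ∑ x, p x * e x + ∑ x, |q x - p x| := by
  rw [← sum_add_distrib]
  refine sum_le_sum fun x _ => ?_
  have : (q x - p x) * e x ≤ |q x - p x| :=
    (mul_le_mul_of_nonneg_right (le_abs_self _) (he₀ x)).trans
      (mul_le_of_le_one_right (abs_nonneg _) (he₁ x))
  linarith

theorem channel_coding_from_compound_source_coding_general
    {F : Type*} [Field F]
    {U : Type*} [AddCommGroup U] [Module F U] [Fintype U]
    {C : Type*} [AddCommGroup C] [Module F C] [Fintype C]
    {L : ℕ} {Y : Fin L → Type*} [∀ l, Fintype (Y l)] [∀ l, DecidableEq (Y l)]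
    (Θ : U → Matrix (∀ l, Y l) (∀ l, Y l) ℂ) (hΘ : ∀ u, IsDensity (Θ u))
    (𝔸 : Finset (Finset (Fin L)))
    (Ptil : U → ℝ)
    (ε' ε'' : ℝ)
    -- the input is almost uniform
    (huni : ∑ u, |Ptil u - (Fintype.card U : ℝ)⁻¹| ≤ ε')
    -- the source code: a surjective linear encoder and measurements as decoders
    (g : U →ₗ[F] C) (hg : Function.Surjective g)
    (h : ∀ A ∈ 𝔸, C → U → Matrix (SubCfg Y A) (SubCfg Y A) ℂ)
    (hPOVM : ∀ A (hA : A ∈ 𝔸) (c : C),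
      (∀ u, (h A hA c u).PosSemidef) ∧ ∑ u, h A hA c u = 1)
    -- ε''-reliability of the source code
    (hrel : ∀ A (hA : A ∈ 𝔸),
      ∑ u, Ptil u * (1 - (((h A hA (g u) u) * reduceTo A (Θ u)).trace).re) ≤ ε'') :
    ∃ m : ℕ, 0 < m ∧ Fintype.card U = m * Fintype.card C ∧
      ∃ (Enc : C → Fin m → U)
        (Dec : ∀ A ∈ 𝔸, C → Fin m → Matrix (SubCfg Y A) (SubCfg Y A) ℂ),
        -- the decoders are measurements with outcomes in the secret set
        (∀ A (hA : A ∈ 𝔸) (c : C), IsPOVM (Dec A hA c)) ∧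
        -- average (over the family, indexed by c) probability of error bound
        (∀ A (hA : A ∈ 𝔸),
          ∑ c, (Fintype.card C : ℝ)⁻¹ * avgError (Enc c) Θ A (Dec A hA c) ≤
            ε' + ε'') := by
  classical
  obtain ⟨m, hm, E, hE⟩ : ∃ m, 0 < m ∧ ∃ E : C × Fin m ≃ U, ∀ p, g (E p) = p.1 :=
    g.toAddMonoidHom.exists_prod_fin_equiv_of_surjective hg
  have hcard : Fintype.card U = m * Fintype.card C := by
    rw [← Fintype.card_congr E, Fintype.card_prod, Fintype.card_fin, mul_comm]
  let Enc (c : C) : Fin m ↪ U := (Function.Embedding.sectR c (Fin m)).trans E.toEmbedding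
  let s₀ : Fin m := ⟨0, hm⟩
  refine ⟨m, hm, hcard, fun c => Enc c, fun A hA c => relabelPOVM (h A hA c) (Enc c) s₀,
    fun A hA c => IsPOVM.relabel (hPOVM A hA c) _ _, fun A hA => ?_⟩
  set e : U → ℝ := fun u => 1 - (h A hA (g u) u * reduceTo A (Θ u)).trace.re
  have hρ (u : U) : IsDensity (reduceTo A (Θ u)) := (hΘ u).reduceTo A
  have he₀ (u : U) : 0 ≤ e u :=
    sub_nonneg.mpr (IsPOVM.re_trace_mul_le_one (hPOVM A hA (g u)) (hρ u) u)
  have he₁ (u : U) : e u ≤ 1 :=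
    sub_le_self _ (((hPOVM A hA (g u)).1 u).re_trace_mul_nonneg (hρ u).1)
  calc ∑ c, (Fintype.card C : ℝ)⁻¹ * avgError (Enc c) Θ A (relabelPOVM (h A hA c) (Enc c) s₀)
      ≤ ∑ c, (Fintype.card C : ℝ)⁻¹ * ((m : ℝ)⁻¹ * ∑ i, e (E (c, i))) := by
        gcongr with c
        simpa [e, Enc, hE] using
          avgError_relabelPOVM_le (fun u => (hΘ u).1) A (hPOVM A hA c).1 (Enc c) s₀
    _ = ∑ u, (Fintype.card U : ℝ)⁻¹ * e u := by
        rw [← E.sum_comp, Fintype.sum_prod_type, hcard, Nat.cast_mul, mul_inv]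
        simp only [mul_sum, mul_left_comm, mul_assoc]
    _ ≤ ∑ u, Ptil u * e u + ∑ u, |(Fintype.card U : ℝ)⁻¹ - Ptil u| :=
        sum_mul_le_sum_mul_add_sum_abs_sub _ _ e he₀ he₁
    _ ≤ ε' + ε'' := by
        simp only [abs_sub_comm _ (Ptil _)]
        linarith [hrel A hA]

/-- **Channel coding from source coding with compound quantum side information**
(Lemma 3): from an `ε''`-reliable source code with a linear encoder for an
almost uniform input, one obtains a family of channel encoders/decoders whose
error probability averaged over the family is at most `ε' + ε''`. -/
theorem channel_coding_from_compound_source_coding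
    {F : Type*} [Field F] [Fintype F]
    {U : Type*} [AddCommGroup U] [Module F U] [Fintype U] [DecidableEq U] [Nonempty U]
    {C : Type*} [AddCommGroup C] [Module F C] [Fintype C] [DecidableEq C]
    {L : ℕ} {Y : Fin L → Type*} [∀ l, Fintype (Y l)] [∀ l, DecidableEq (Y l)]
    (Θ : U → Matrix (∀ l, Y l) (∀ l, Y l) ℂ) (hΘ : ∀ u, IsDensity (Θ u))
    (𝔸 : Finset (Finset (Fin L)))
    (Ptil : U → ℝ) (hPtil : IsProbDist Ptil)
    (ε' ε'' : ℝ) (hε' : 0 ≤ ε') (hε'' : 0 ≤ ε'')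
    -- the input is almost uniform
    (huni : ∑ u, |Ptil u - (Fintype.card U : ℝ)⁻¹| ≤ ε')
    -- the source code: a surjective linear encoder and measurements as decoders
    (g : U →ₗ[F] C) (hg : Function.Surjective g)
    (h : ∀ A ∈ 𝔸, C → U → Matrix (SubCfg Y A) (SubCfg Y A) ℂ)
    (hPOVM : ∀ A (hA : A ∈ 𝔸) (c : C),
      (∀ u, (h A hA c u).PosSemidef) ∧ ∑ u, h A hA c u = 1)
    -- ε''-reliability of the source code
    (hrel : ∀ A (hA : A ∈ 𝔸),
      ∑ u, Ptil u * (1 - (((h A hA (g u) u) * reduceTo A (Θ u)).trace).re) ≤ ε'') :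
    ∃ m : ℕ, 0 < m ∧ Fintype.card U = m * Fintype.card C ∧
      ∃ (Enc : C → Fin m → U)
        (Dec : ∀ A ∈ 𝔸, C → Fin m → Matrix (SubCfg Y A) (SubCfg Y A) ℂ),
        -- the decoders are measurements with outcomes in the secret set
        (∀ A (hA : A ∈ 𝔸) (c : C), IsPOVM (Dec A hA c)) ∧
        -- average (over the family, indexed by c) probability of error bound
        (∀ A (hA : A ∈ 𝔸),
          ∑ c, (Fintype.card C : ℝ)⁻¹ * avgError (Enc c) Θ A (Dec A hA c) ≤
            ε' + ε'') :=
  channel_coding_from_compound_source_coding_general Θ hΘ 𝔸 Ptil ε' ε'' huni g hg h hPOVM hrel
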